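/- Fix an integer k ≥ 1. The polynomial sequence {W(n,k)(x)}_{n ≥ k} is a generalized Sturm sequence: each W(n,k)(x) is real-rooted and W(n,k)(x) ≼ W(n+1,k)(x) for all n ≥ k. Here W(n,k)(x) = Σ_{m=0}^{k} w(n,k,m)x^m with w(n,k,m) = (1/k)*C(n,k-1)*C(n-k-1,m-1)*C(k,m) for 0 < m ≤ k, k+m ≤ n, w(n,k,0)=1 if n=k, and 0 otherwise. -/

import Mathlib

open Polynomial

/-- A real polynomial is real-rooted if its number of real roots (with multiplicity)
equals its degree, i.e. all of its complex roots are real. -/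
def RealRooted (F : Polynomial ℝ) : Prop :=
  Multiset.card F.roots = F.natDegree

/-- `Interlaces G F` means `G ≼ F`: listing the zeros of the real-rooted polynomials
`F` and `G` in weakly decreasing order `α₁ ≥ α₂ ≥ ⋯` and `β₁ ≥ β₂ ≥ ⋯`, either
`deg F = deg G = n` and `βₙ ≤ αₙ ≤ βₙ₋₁ ≤ αₙ₋₁ ≤ ⋯ ≤ β₁ ≤ α₁`, or
`deg F = deg G + 1 = n` and `αₙ ≤ βₙ₋₁ ≤ αₙ₋₁ ≤ ⋯ ≤ β₁ ≤ α₁`; by convention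
constants interlace polynomials of degree at most one, and `0` interlaces and is
interlaced by every polynomial. (Below the sorted lists are ascending, so the
indices are reversed.) -/
noncomputable def Interlaces (G F : Polynomial ℝ) : Prop :=
  G = 0 ∨ F = 0 ∨ (F.natDegree ≤ 1 ∧ G.natDegree = 0) ∨
  (RealRooted F ∧ RealRooted G ∧
    (let a := F.roots.sort (· ≤ ·)
     let b := G.roots.sort (· ≤ ·)
     (F.natDegree = G.natDegree ∧ ∀ i < F.natDegree,
        b.getD i 0 ≤ a.getD i 0 ∧ (i + 1 < F.natDegree → a.getD i 0 ≤ b.getD (i + 1) 0)) ∨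
     (F.natDegree = G.natDegree + 1 ∧ ∀ i < G.natDegree,
        a.getD i 0 ≤ b.getD i 0 ∧ b.getD i 0 ≤ a.getD (i + 1) 0)))


noncomputable def w (n k m : ℤ) : ℚ :=
  if 0 < m ∧ m ≤ k ∧ k + m ≤ n then
    (1 / (k : ℚ)) * (n.toNat.choose (k - 1).toNat : ℚ) *
      ((n - k - 1).toNat.choose (m - 1).toNat : ℚ) * (k.toNat.choose m.toNat : ℚ)
  else if m = 0 ∧ n = k then 1 else 0

noncomputable def W (n k : ℤ) : Polynomial ℝ :=
  ∑ m ∈ Finset.range (k.toNat + 1), Polynomial.C ((w n k m : ℚ) : ℝ) * X ^ m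

/-!
For `n = k + 1 + a` one has `W n k = γ · x · U_a` with `γ > 0` and
`U_a = reducedW k a = ∑ⱼ C(a,j) C(k,j+1) xʲ`, and these polynomials satisfy
`(a + 2) U_{a+1} = (a + 2 + (k - 1) x) U_a + x (1 - x) U_a'`.
At a simple negative root `ρ` of `U_a` this reads `(a + 2) U_{a+1}(ρ) = ρ (1 - ρ) U_a'(ρ)`,
of sign opposite to `U_a'(ρ)`, while `U_{a+1}(0) = U_a(0) = k > 0`. Hence `U_{a+1}` alternates
in sign along the roots of `U_a` followed by `0`, and the intermediate value theorem puts one root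
of `U_{a+1}` in each gap, plus one to the left of all of them (seen from the sign at `-∞`) when its
degree is one higher. By induction on `a` all roots are simple and negative, and the roots of
`W n k`, namely those of `U_a` together with `0`, interlace those of `W (n + 1) k`.
-/

open Polynomial Finset Filter Lagrange

lemma mul_neg_of_neg_one_pow_mul_pos {x y : ℝ} (n : ℕ) (hx : 0 < (-1) ^ (n + 1) * x)
    (hy : 0 < (-1) ^ n * y) : x * y < 0 := by
  rw [pow_succ] at hx
  rcases neg_one_pow_eq_or ℝ n with h | h <;> rw [h] at hx hy <;> nlinarith

lemma Nat.cast_choose_succ_mul (n k : ℕ) :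
    (n.choose (k + 1) : ℝ) * (k + 1) = n.choose k * (n - k) := by
  rcases le_or_gt k n with h | h
  · have := congrArg (Nat.cast (R := ℝ)) (Nat.choose_succ_right_eq n k)
    push_cast [Nat.cast_sub h] at this
    exact this
  · simp [Nat.choose_eq_zero_of_lt h, Nat.choose_eq_zero_of_lt (Nat.lt_succ_of_lt h)]

namespace Lagrange

theorem roots_nodal {ι R : Type*} [CommRing R] [IsDomain R] (s : Finset ι) (v : ι → R) :
    (nodal s v).roots = s.val.map v := by
  rw [nodal, Finset.prod_eq_multiset_prod, ← roots_multiset_prod_X_sub_C (s.val.map v),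
    Multiset.map_map]
  rfl

theorem neg_one_pow_mul_eval_derivative_nodal_pos {d i : ℕ} {r : ℕ → ℝ}
    (hr : StrictMonoOn r (Set.Iio d)) (hi : i < d) :
    0 < (-1) ^ (d - 1 - i) * (derivative (nodal (range d) r)).eval (r i) := by
  have hsplit : (range d).erase i = range i ∪ Ioo i d := by
    ext j; simp only [mem_erase, mem_range, mem_union, mem_Ioo]; omega
  have hdisj : Disjoint (range i) (Ioo i d) :=
    disjoint_left.2 fun j hj hj' => by simp only [mem_range, mem_Ioo] at hj hj'; omega
  rw [eval_nodal_derivative_eval_node_eq (mem_range.2 hi), eval_nodal, hsplit,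
    prod_union hdisj, mul_left_comm, show d - 1 - i = #(Ioo i d) by rw [Nat.card_Ioo]; omega,
    ← prod_neg]
  refine mul_pos (prod_pos fun j hj => ?_) (prod_pos fun j hj => ?_)
  · have hj : j < i := mem_range.1 hj
    exact sub_pos.2 (hr (show j < d by omega) hi hj)
  · obtain ⟨hij, hjd⟩ := mem_Ioo.1 hj
    exact neg_pos.2 (sub_neg.2 (hr hi hjd hij))

end Lagrange

theorem List.getD_map_range {α : Type*} (t : ℕ → α) {D i : ℕ} (hi : i < D) (x : α) :
    ((List.range D).map t).getD i x = t i := by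
  simp [List.getD_eq_getElem?_getD, hi]

namespace Polynomial

theorem exists_isRoot_mem_Ioo_of_eval_mul_neg (p : ℝ[X]) {x y : ℝ} (hxy : x < y)
    (h : p.eval x * p.eval y < 0) : ∃ z ∈ Set.Ioo x y, p.IsRoot z := by
  have hcont : ContinuousOn (p.eval ·) (Set.Icc x y) := p.continuous.continuousOn
  rcases mul_neg_iff.1 h with ⟨hx, hy⟩ | ⟨hx, hy⟩
  · exact intermediate_value_Ioo' hxy.le hcont ⟨hy, hx⟩
  · exact intermediate_value_Ioo hxy.le hcont ⟨hx, hy⟩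

theorem exists_lt_neg_one_pow_natDegree_mul_eval_pos {q : ℝ[X]} (hlc : 0 < q.leadingCoeff)
    (hdeg : 0 < q.natDegree) (b : ℝ) : ∃ y < b, 0 < (-1) ^ q.natDegree * q.eval y := by
  set R := C ((-1 : ℝ) ^ q.natDegree) * q.comp (-X)
  have hRlc : R.leadingCoeff = q.leadingCoeff := by
    simp [R, ← mul_assoc, ← mul_pow]
  have hRdeg : 0 < R.degree := by
    rw [← natDegree_pos_iff_degree_pos, natDegree_C_mul (pow_ne_zero _ (by norm_num)),
      natDegree_comp]
    simpa using hdeg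
  obtain ⟨x, hx, hxb⟩ := ((R.tendsto_atTop_of_leadingCoeff_nonneg hRdeg
    (hRlc ▸ hlc.le)).eventually_gt_atTop 0 |>.and (eventually_gt_atTop (-b))).exists
  exact ⟨-x, by linarith, by simpa [R] using hx⟩

theorem natDegree_C_mul_nodal {E : ℝ} (hE : E ≠ 0) (D : ℕ) (t : ℕ → ℝ) :
    (C E * nodal (range D) t).natDegree = D := by
  rw [natDegree_C_mul hE, natDegree_nodal, card_range]

theorem realRooted_C_mul_nodal {ι : Type*} {E : ℝ} (hE : E ≠ 0) (s : Finset ι) (v : ι → ℝ) :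
    RealRooted (C E * nodal s v) := by
  rw [RealRooted, roots_C_mul _ hE, roots_nodal, natDegree_C_mul hE, natDegree_nodal,
    Multiset.card_map, card_val]

theorem sort_roots_C_mul_nodal {E : ℝ} (hE : E ≠ 0) {t : ℕ → ℝ} (ht : Monotone t) (D : ℕ) :
    (C E * nodal (range D) t).roots.sort (· ≤ ·) = (List.range D).map t := by
  rw [roots_C_mul _ hE, roots_nodal, range_val, Multiset.range, Multiset.map_coe,
    Multiset.coe_sort]
  exact List.mergeSort_eq_self _
    (List.pairwise_map.2 (List.pairwise_lt_range.imp fun h => by simpa using ht h.le))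

theorem interlaces_C_mul_nodal {E E' : ℝ} (hE : E ≠ 0) (hE' : E' ≠ 0) {t t' : ℕ → ℝ}
    (ht : Monotone t) (ht' : Monotone t') (D : ℕ) (h : ∀ i, t i ≤ t' i ∧ t' i ≤ t (i + 1)) :
    Interlaces (C E * nodal (range D) t) (C E' * nodal (range D) t') := by
  refine .inr <| .inr <| .inr ⟨realRooted_C_mul_nodal hE' _ _, realRooted_C_mul_nodal hE _ _, ?_⟩
  simp only [sort_roots_C_mul_nodal hE ht, sort_roots_C_mul_nodal hE' ht',
    natDegree_C_mul_nodal hE, natDegree_C_mul_nodal hE']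
  refine .inl ⟨trivial, fun i hi => ?_⟩
  rw [List.getD_map_range _ hi, List.getD_map_range _ hi]
  exact ⟨(h i).1, fun hi' => by rw [List.getD_map_range _ hi']; exact (h i).2⟩

theorem interlaces_C_mul_nodal_succ {E E' : ℝ} (hE : E ≠ 0) (hE' : E' ≠ 0) {t t' : ℕ → ℝ}
    (ht : Monotone t) (ht' : Monotone t') (D : ℕ) (h : ∀ i, t' i ≤ t i ∧ t i ≤ t' (i + 1)) :
    Interlaces (C E * nodal (range D) t) (C E' * nodal (range (D + 1)) t') := by
  refine .inr <| .inr <| .inr ⟨realRooted_C_mul_nodal hE' _ _, realRooted_C_mul_nodal hE _ _, ?_⟩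
  simp only [sort_roots_C_mul_nodal hE ht, sort_roots_C_mul_nodal hE' ht',
    natDegree_C_mul_nodal hE, natDegree_C_mul_nodal hE']
  refine .inr ⟨trivial, fun i hi => ?_⟩
  rw [List.getD_map_range _ (by omega), List.getD_map_range _ hi,
    List.getD_map_range _ (by omega)]
  exact h i

theorem eq_C_leadingCoeff_mul_nodal_of_injOn {R ι : Type*} [CommRing R] [IsDomain R] {p : R[X]}
    (hp : p ≠ 0) {S : Finset ι} {v : ι → R} (hcard : #S = p.natDegree) (hinj : Set.InjOn v S)
    (hroot : ∀ i ∈ S, p.IsRoot (v i)) : p = C p.leadingCoeff * nodal S v := by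
  have hle : S.val.map v ≤ p.roots := by
    refine (Multiset.le_iff_subset (Multiset.nodup_map_iff_inj_on S.nodup |>.2 hinj)).2
      fun z hz => ?_
    obtain ⟨i, hi, rfl⟩ := Multiset.mem_map.1 hz
    exact (mem_roots hp).2 (hroot i hi)
  have hroots : S.val.map v = p.roots :=
    Multiset.eq_of_le_of_card_le hle (by simpa [hcard] using p.card_roots')
  have hfac := C_leadingCoeff_mul_prod_multiset_X_sub_C (p := p) (by rw [← hroots]; simp [hcard])
  rw [← hroots, Multiset.map_map] at hfac
  rw [nodal, prod_eq_multiset_prod]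
  exact hfac.symm

theorem exists_eq_C_mul_nodal_of_alternating {p : ℝ[X]} {d : ℕ} {t : ℕ → ℝ}
    (hdeg : p.natDegree = d) (ht : ∀ i < d, t i < t (i + 1))
    (hsign : ∀ i ≤ d, 0 < (-1) ^ (d - i) * p.eval (t i)) :
    ∃ s : ℕ → ℝ, (∀ i < d, t i < s i ∧ s i < t (i + 1)) ∧
      p = C p.leadingCoeff * nodal (range d) s := by
  have hroot : ∀ i, ∃ z, i < d → z ∈ Set.Ioo (t i) (t (i + 1)) ∧ p.IsRoot z := by
    intro i
    by_cases hi : i < d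
    · have hx := hsign i hi.le
      rw [show d - i = d - (i + 1) + 1 by omega] at hx
      obtain ⟨z, hz, hpz⟩ := p.exists_isRoot_mem_Ioo_of_eval_mul_neg (ht i hi)
        (mul_neg_of_neg_one_pow_mul_pos _ hx (hsign (i + 1) hi))
      exact ⟨z, fun _ => ⟨hz, hpz⟩⟩
    · exact ⟨0, fun h => absurd h hi⟩
  choose s hs using hroot
  refine ⟨s, fun i hi => (hs i hi).1, ?_⟩
  have hp : p ≠ 0 := fun h => by simpa [h] using hsign d le_rfl
  have htm : StrictMonoOn t (Set.Iic d) :=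
    strictMonoOn_Iic_of_lt_succ fun m hm => by simpa using ht m hm
  have hsm : StrictMonoOn s (Set.Iio d) := fun i (hi : i < d) j (hj : j < d) hij =>
    calc s i < t (i + 1) := (hs i hi).1.2
      _ ≤ t j := htm.monotoneOn (show i + 1 ≤ d by omega) (show j ≤ d by omega) hij
      _ < s j := (hs j hj).1.1
  refine eq_C_leadingCoeff_mul_nodal_of_injOn hp (by rw [card_range, hdeg]) ?_
    fun i hi => (hs i (mem_range.1 hi)).2
  rw [coe_range]
  exact hsm.injOn

theorem coeff_X_mul_derivative {R : Type*} [CommSemiring R] (p : R[X]) (n : ℕ) :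
    (X * derivative p).coeff n = n * p.coeff n := by
  cases n
  · simp
  · simp [coeff_X_mul, coeff_derivative, mul_comm]

end Polynomial

/-- `r` lists the roots of `p` in increasing order and is `0` from index `p.natDegree` on, so the
strict increase up to that index makes the roots simple and negative. -/
structure IsNegRootSeq (p : ℝ[X]) (r : ℕ → ℝ) : Prop where
  lt_succ : ∀ i < p.natDegree, r i < r (i + 1)
  eq_zero : ∀ i, p.natDegree ≤ i → r i = 0
  eq_C_mul_nodal : p = C p.leadingCoeff * nodal (range p.natDegree) r

namespace IsNegRootSeq

variable {p q : ℝ[X]} {r : ℕ → ℝ}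

theorem of_natDegree_eq_zero (hp : p.natDegree = 0) : IsNegRootSeq p 0 where
  lt_succ := by simp [hp]
  eq_zero _ _ := rfl
  eq_C_mul_nodal := by
    rw [hp, range_zero, nodal_empty, mul_one, leadingCoeff, hp]
    exact eq_C_of_natDegree_eq_zero hp

theorem strictMonoOn (hr : IsNegRootSeq p r) : StrictMonoOn r (Set.Iic p.natDegree) :=
  strictMonoOn_Iic_of_lt_succ fun m hm => by simpa using hr.lt_succ m hm

theorem monotone (hr : IsNegRootSeq p r) : Monotone r := by
  refine monotone_nat_of_le_succ fun i => ?_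
  rcases lt_or_ge i p.natDegree with hi | hi
  · exact (hr.lt_succ i hi).le
  · rw [hr.eq_zero i hi, hr.eq_zero (i + 1) (by omega)]

theorem lt_zero (hr : IsNegRootSeq p r) {i : ℕ} (hi : i < p.natDegree) : r i < 0 :=
  hr.eq_zero _ le_rfl ▸ hr.strictMonoOn (Set.mem_Iic.2 hi.le) (Set.mem_Iic.2 le_rfl) hi

theorem isRoot (hr : IsNegRootSeq p r) {i : ℕ} (hi : i < p.natDegree) : p.IsRoot (r i) := by
  rw [IsRoot, hr.eq_C_mul_nodal, eval_mul, eval_nodal_at_node (mem_range.2 hi), mul_zero]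

theorem neg_one_pow_mul_eval_derivative_pos (hr : IsNegRootSeq p r)
    (hlc : 0 < p.leadingCoeff) {i : ℕ} (hi : i < p.natDegree) :
    0 < (-1) ^ (p.natDegree - 1 - i) * (derivative p).eval (r i) := by
  have h := congrArg (fun q => (derivative q).eval (r i)) hr.eq_C_mul_nodal
  simp only [derivative_C_mul, eval_mul, eval_C] at h
  rw [h, mul_left_comm]
  exact mul_pos hlc
    (neg_one_pow_mul_eval_derivative_nodal_pos (hr.strictMonoOn.mono Set.Iio_subset_Iic_self) hi)

theorem X_mul_eq_C_mul_nodal (hr : IsNegRootSeq p r) :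
    X * p = C p.leadingCoeff * nodal (range (p.natDegree + 1)) r := by
  conv_lhs => rw [hr.eq_C_mul_nodal]
  simp only [nodal, prod_range_succ, hr.eq_zero _ le_rfl, C_0, sub_zero]
  ring

theorem exists_of_natDegree_eq (hr : IsNegRootSeq p r) (hq : q.natDegree = p.natDegree)
    (hsign : ∀ i ≤ p.natDegree, 0 < (-1) ^ (p.natDegree - i) * q.eval (r i)) :
    ∃ r', IsNegRootSeq q r' ∧ ∀ i, r i ≤ r' i ∧ r' i ≤ r (i + 1) := by
  set d := p.natDegree
  obtain ⟨s, hs, hfac⟩ := exists_eq_C_mul_nodal_of_alternating hq hr.lt_succ hsign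
  set r' : ℕ → ℝ := fun i => if i < d then s i else 0
  have hnodal : nodal (range d) r' = nodal (range d) s :=
    prod_congr rfl fun i hi => by simp only [r', if_pos (mem_range.1 hi)]
  refine ⟨r', ⟨?_, ?_, ?_⟩, fun i => ?_⟩
  · rw [hq]
    intro i hi
    simp only [r', if_pos hi]
    split_ifs with h
    · exact (hs i hi).2.trans (hs (i + 1) h).1
    · exact (hs i hi).2.trans_le (hr.eq_zero _ (by omega)).le
  · rw [hq]
    exact fun i hi => if_neg (by omega)
  · rwa [hq, hnodal]
  · by_cases hi : i < d
    · simp only [r', if_pos hi]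
      exact ⟨(hs i hi).1.le, (hs i hi).2.le⟩
    · simp only [r', if_neg hi, hr.eq_zero i (by omega), hr.eq_zero (i + 1) (by omega), le_refl,
        and_self]

theorem exists_of_natDegree_eq_succ (hr : IsNegRootSeq p r) (hq : q.natDegree = p.natDegree + 1)
    (hlc : 0 < q.leadingCoeff)
    (hsign : ∀ i ≤ p.natDegree, 0 < (-1) ^ (p.natDegree - i) * q.eval (r i)) :
    ∃ r', IsNegRootSeq q r' ∧ ∀ i, r' i ≤ r i ∧ r i ≤ r' (i + 1) := by
  set d := p.natDegree
  obtain ⟨y, hy, hqy⟩ := exists_lt_neg_one_pow_natDegree_mul_eval_pos hlc (by omega) (r 0)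
  set t : ℕ → ℝ := fun | 0 => y | i + 1 => r i
  have ht : ∀ i < d + 1, t i < t (i + 1)
    | 0, _ => hy
    | i + 1, hi => hr.lt_succ i (by omega)
  have htsign : ∀ i ≤ d + 1, 0 < (-1) ^ (d + 1 - i) * q.eval (t i)
    | 0, _ => hq ▸ hqy
    | i + 1, hi => by simpa [t] using hsign i (by omega)
  obtain ⟨s, hs, hfac⟩ := exists_eq_C_mul_nodal_of_alternating hq ht htsign
  set r' : ℕ → ℝ := fun i => if i < d + 1 then s i else 0
  have hnodal : nodal (range (d + 1)) r' = nodal (range (d + 1)) s :=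
    prod_congr rfl fun i hi => by simp only [r', if_pos (mem_range.1 hi)]
  refine ⟨r', ⟨?_, ?_, ?_⟩, fun i => ?_⟩
  · rw [hq]
    intro i hi
    simp only [r', if_pos hi]
    split_ifs with h
    · exact (hs i hi).2.trans (hs (i + 1) h).1
    · exact (hs i hi).2.trans_le (hr.eq_zero _ (by omega)).le
  · rw [hq]
    exact fun i hi => if_neg (by omega)
  · rwa [hq, hnodal]
  · by_cases hi : i < d
    · simp only [r', if_pos (by omega : i < d + 1), if_pos (by omega : i + 1 < d + 1)]
      exact ⟨(hs i (by omega)).2.le, (hs (i + 1) (by omega)).1.le⟩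
    · by_cases hid : i = d
      · subst hid
        simp only [r', if_pos (by omega : d < d + 1), if_neg (lt_irrefl _)]
        exact ⟨(hs d (by omega)).2.le, (hr.eq_zero d le_rfl).le⟩
      · simp only [r', if_neg (by omega : ¬i < d + 1), if_neg (by omega : ¬i + 1 < d + 1),
          hr.eq_zero i (by omega), le_refl, and_self]

end IsNegRootSeq

noncomputable def reducedW (K a : ℕ) : ℝ[X] :=
  ∑ j ∈ range K, C ((a.choose j * K.choose (j + 1) : ℕ) : ℝ) * X ^ j

section reducedW

variable (K a : ℕ)

theorem coeff_reducedW (j : ℕ) : (reducedW K a).coeff j = a.choose j * K.choose (j + 1) := by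
  simp only [reducedW, finsetSum_coeff, coeff_C_mul_X_pow, sum_ite_eq, mem_range]
  split_ifs with h
  · push_cast; rfl
  · simp [Nat.choose_eq_zero_of_lt (by omega : K < j + 1)]

theorem eval_zero_reducedW : (reducedW K a).eval 0 = K := by
  simp [← coeff_zero_eq_eval_zero, coeff_reducedW]

theorem reducedW_succ :
    C ((a : ℝ) + 2) * reducedW K (a + 1) =
      (C ((a : ℝ) + 2) + C ((K : ℝ) - 1) * X) * reducedW K a +
        X * (1 - X) * derivative (reducedW K a) := by
  rw [show X * (1 - X) * derivative (reducedW K a) =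
    X * derivative (reducedW K a) - X * (X * derivative (reducedW K a)) by ring]
  ext (_ | m)
  · simp [coeff_reducedW]
  · simp only [coeff_reducedW, coeff_X_mul, coeff_X_mul_derivative, coeff_add, coeff_sub,
      coeff_C_mul, coeff_derivative, add_mul, mul_assoc]
    have pascal : ((a + 1).choose (m + 1) : ℝ) = a.choose m + a.choose (m + 1) := by
      exact_mod_cast Nat.choose_succ_succ' a m
    have e1 := Nat.cast_choose_succ_mul a m
    have e2 := Nat.cast_choose_succ_mul K (m + 1)
    push_cast at e2 ⊢
    linear_combination ((a : ℝ) + 2) * (K.choose (m + 2) : ℝ) * pascal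
      - (K.choose (m + 2) : ℝ) * e1 + (a.choose m : ℝ) * e2

variable {K} (hK : 1 ≤ K)
include hK

theorem natDegree_reducedW : (reducedW K a).natDegree = min a (K - 1) := by
  refine natDegree_eq_of_le_of_coeff_ne_zero (natDegree_le_iff_coeff_eq_zero.2 fun N hN => ?_) ?_
  · rw [coeff_reducedW]
    rcases lt_or_ge a N with h | h
    · simp [Nat.choose_eq_zero_of_lt h]
    · simp [Nat.choose_eq_zero_of_lt (by omega : K < N + 1)]
  · rw [coeff_reducedW]
    exact mul_ne_zero (by exact_mod_cast (Nat.choose_pos (min_le_left _ _)).ne')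
      (by exact_mod_cast (Nat.choose_pos (by omega)).ne')

theorem leadingCoeff_reducedW_pos : 0 < (reducedW K a).leadingCoeff := by
  rw [leadingCoeff, natDegree_reducedW a hK, coeff_reducedW]
  exact mul_pos (by exact_mod_cast Nat.choose_pos (min_le_left _ _))
    (by exact_mod_cast Nat.choose_pos (by omega))

end reducedW

namespace IsNegRootSeq

variable {K a : ℕ} {r : ℕ → ℝ}

theorem neg_one_pow_mul_eval_reducedW_succ_pos (hK : 1 ≤ K) (hr : IsNegRootSeq (reducedW K a) r)
    {i : ℕ} (hi : i ≤ (reducedW K a).natDegree) :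
    0 < (-1) ^ ((reducedW K a).natDegree - i) * (reducedW K (a + 1)).eval (r i) := by
  set d := (reducedW K a).natDegree
  rcases hi.lt_or_eq with hi | rfl
  · have hrec := congrArg (eval (r i)) (reducedW_succ K a)
    simp only [eval_mul, eval_add, eval_sub, eval_C, eval_X, eval_one, (hr.isRoot hi).eq_zero,
      mul_zero, zero_add] at hrec
    have hder := hr.neg_one_pow_mul_eval_derivative_pos (leadingCoeff_reducedW_pos a hK) hi
    have hneg := hr.lt_zero hi
    rw [show d - i = d - 1 - i + 1 by omega, pow_succ]
    refine pos_of_mul_pos_right ?_ (by positivity : (0 : ℝ) ≤ a + 2)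
    have key : (a + 2 : ℝ) * ((-1) ^ (d - 1 - i) * -1 * (reducedW K (a + 1)).eval (r i)) =
        -(r i * (1 - r i)) * ((-1) ^ (d - 1 - i) * (derivative (reducedW K a)).eval (r i)) := by
      linear_combination (-(-1 : ℝ) ^ (d - 1 - i)) * hrec
    rw [key]
    exact mul_pos (by nlinarith) hder
  · rw [hr.eq_zero _ le_rfl, Nat.sub_self, pow_zero, one_mul, eval_zero_reducedW]
    exact_mod_cast hK

theorem exists_reducedW_succ (hK : 1 ≤ K) (hr : IsNegRootSeq (reducedW K a) r) :
    ∃ r', IsNegRootSeq (reducedW K (a + 1)) r' ∧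
      ((reducedW K (a + 1)).natDegree = (reducedW K a).natDegree ∧
          (∀ i, r i ≤ r' i ∧ r' i ≤ r (i + 1)) ∨
        (reducedW K (a + 1)).natDegree = (reducedW K a).natDegree + 1 ∧
          ∀ i, r' i ≤ r i ∧ r i ≤ r' (i + 1)) := by
  have hsign := fun i => hr.neg_one_pow_mul_eval_reducedW_succ_pos hK (i := i)
  have hdeg : (reducedW K (a + 1)).natDegree = (reducedW K a).natDegree ∨
      (reducedW K (a + 1)).natDegree = (reducedW K a).natDegree + 1 := by
    rw [natDegree_reducedW _ hK, natDegree_reducedW _ hK]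
    omega
  rcases hdeg with h | h
  · obtain ⟨r', hr', hint⟩ := hr.exists_of_natDegree_eq h hsign
    exact ⟨r', hr', .inl ⟨h, hint⟩⟩
  · obtain ⟨r', hr', hint⟩ :=
      hr.exists_of_natDegree_eq_succ h (leadingCoeff_reducedW_pos _ hK) hsign
    exact ⟨r', hr', .inr ⟨h, hint⟩⟩

end IsNegRootSeq

theorem exists_isNegRootSeq_reducedW {K : ℕ} (hK : 1 ≤ K) :
    ∀ a, ∃ r, IsNegRootSeq (reducedW K a) r
  | 0 => ⟨0, .of_natDegree_eq_zero (by rw [natDegree_reducedW 0 hK, Nat.zero_min])⟩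
  | a + 1 =>
    let ⟨_, hr⟩ := exists_isNegRootSeq_reducedW hK a
    let ⟨r', hr', _⟩ := hr.exists_reducedW_succ hK
    ⟨r', hr'⟩

theorem W_self (k : ℤ) : W k k = 1 := by
  rw [W, sum_eq_single 0]
  · simp [w]
  · intro m _ hm
    simp [w, hm]
  · simp

theorem coeff_W (n k : ℤ) (m : ℕ) :
    (W n k).coeff m = if m ≤ k.toNat then (w n k m : ℝ) else 0 := by
  simp only [W, finsetSum_coeff, coeff_C_mul_X_pow, sum_ite_eq, mem_range, Nat.lt_succ_iff]

theorem W_eq_C_mul_X_mul_reducedW (k : ℤ) (a : ℕ) :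
    W (k + 1 + a) k =
      C ((k : ℝ)⁻¹ * (k + 1 + a).toNat.choose (k - 1).toNat) * (X * reducedW k.toNat a) := by
  ext (_ | m)
  · simp [coeff_W, w, show k + 1 + (a : ℤ) ≠ k by omega]
  · rw [coeff_W, coeff_C_mul, coeff_X_mul, coeff_reducedW, w,
      show (k + 1 + a - k - 1).toNat = a by omega, show ((m + 1 : ℕ) - 1 : ℤ).toNat = m by omega,
      Int.toNat_natCast]
    split_ifs with hK hw hw0
    · push_cast
      ring
    · omega
    · rw [Nat.choose_eq_zero_of_lt (by omega : a < m)]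
      simp
    · rw [Nat.choose_eq_zero_of_lt (by omega : k.toNat < m + 1)]
      simp

theorem exists_W_eq_C_mul_nodal {k : ℤ} (hk : 1 ≤ k) {a : ℕ} {r : ℕ → ℝ}
    (hr : IsNegRootSeq (reducedW k.toNat a) r) :
    ∃ E ≠ 0, W (k + 1 + a) k = C E * nodal (range ((reducedW k.toNat a).natDegree + 1)) r := by
  have hγ : (k : ℝ)⁻¹ * (k + 1 + a).toNat.choose (k - 1).toNat ≠ 0 :=
    mul_ne_zero (inv_ne_zero (by exact_mod_cast (by omega : k ≠ 0)))
      (by exact_mod_cast (Nat.choose_pos (by omega)).ne')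
  refine ⟨_, mul_ne_zero hγ (leadingCoeff_reducedW_pos a (K := k.toNat) (by omega)).ne', ?_⟩
  rw [W_eq_C_mul_X_mul_reducedW, hr.X_mul_eq_C_mul_nodal, ← mul_assoc, ← C_mul]

theorem natDegree_W_succ_self {k : ℤ} (hk : 1 ≤ k) : (W (k + 1) k).natDegree = 1 := by
  have hK : 1 ≤ k.toNat := by omega
  obtain ⟨r, hr⟩ := exists_isNegRootSeq_reducedW hK 0
  obtain ⟨E, hE, hW⟩ := exists_W_eq_C_mul_nodal hk hr
  rw [Nat.cast_zero, add_zero] at hW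
  rw [hW, natDegree_C_mul_nodal hE, natDegree_reducedW 0 hK, Nat.zero_min]

theorem realRooted_W_and_interlaces_W_succ {k : ℤ} (hk : 1 ≤ k) (a : ℕ) :
    RealRooted (W (k + 1 + a) k) ∧ Interlaces (W (k + 1 + a) k) (W (k + 1 + a + 1) k) := by
  have hK : 1 ≤ k.toNat := by omega
  obtain ⟨r, hr⟩ := exists_isNegRootSeq_reducedW hK a
  obtain ⟨r', hr', hint⟩ := hr.exists_reducedW_succ hK
  obtain ⟨E, hE, hW⟩ := exists_W_eq_C_mul_nodal hk hr
  obtain ⟨E', hE', hW'⟩ := exists_W_eq_C_mul_nodal hk hr'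
  rw [show k + 1 + a + 1 = k + 1 + ((a + 1 : ℕ) : ℤ) by push_cast; ring, hW, hW']
  refine ⟨realRooted_C_mul_nodal hE _ _, ?_⟩
  rcases hint with ⟨hdeg, h⟩ | ⟨hdeg, h⟩ <;> rw [hdeg]
  · exact interlaces_C_mul_nodal hE hE' hr.monotone hr'.monotone _ h
  · exact interlaces_C_mul_nodal_succ hE hE' hr.monotone hr'.monotone _ h

/-- For fixed k ≥ 1, the sequence {W(n,k)(x)}_{n ≥ k} is a generalized Sturm sequence. -/
theorem stmt15 (k : ℤ) (hk : 1 ≤ k) :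
    ∀ n : ℤ, k ≤ n → RealRooted (W n k) ∧ Interlaces (W n k) (W (n + 1) k) := by
  intro n hn
  obtain rfl | hlt := hn.eq_or_lt
  · refine ⟨by simp [W_self, RealRooted], .inr <| .inr <| .inl ⟨?_, by simp [W_self]⟩⟩
    exact (natDegree_W_succ_self hk).le
  · obtain ⟨a, rfl⟩ : ∃ a : ℕ, n = k + 1 + a := ⟨(n - k - 1).toNat, by omega⟩
    exact realRooted_W_and_interlaces_W_succ hk a
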